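/- arXiv:math/0603032 — 4 statements merged into one kernel-verified Lean document; each statement's English description precedes it below -/
import Mathlib

section
/- Let n ≥ 2 and R = ℤ/nℤ. The group G of bijections of R[[t]] generated by α : p ↦ p + 1 and μ : p ↦ (1+t)p is isomorphic to the restricted wreath product (ℤ/nℤ) ≀ ℤ (the lamplighter group L_n), with the normal closure of α equal to ⊕_ℤ ℤ/nℤ and G ≅ (⊕_ℤ ℤ/nℤ) ⋊ ℤ where ℤ acts by shifting coordinates. -/
noncomputable section LampAux

variable (n : ℕ)

lemma isUnit_one_add_X : IsUnit (1 + PowerSeries.X : PowerSeries (ZMod n)) :=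
  PowerSeries.isUnit_iff_constantCoeff.mpr
    (by rw [map_add, map_one, PowerSeries.constantCoeff_X, add_zero]; exact isUnit_one)

/-- `1 + X` as a unit of `(ZMod n)[[X]]`. -/
noncomputable def Uu : (PowerSeries (ZMod n))ˣ := (isUnit_one_add_X n).unit

lemma Uu_val : ((Uu n : (PowerSeries (ZMod n))ˣ) : PowerSeries (ZMod n))
    = 1 + PowerSeries.X := (isUnit_one_add_X n).unit_spec

/-- `(1+X)^j` for `j : ℤ`. -/
noncomputable def vv (j : ℤ) : PowerSeries (ZMod n) := ((Uu n ^ j : (PowerSeries (ZMod n))ˣ) : _)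

lemma vv_add (i j : ℤ) : vv n (i + j) = vv n i * vv n j := by
  simp [vv, zpow_add]

lemma vv_zero : vv n 0 = 1 := by simp [vv]

lemma vv_one : vv n 1 = 1 + PowerSeries.X := by rw [vv, zpow_one, Uu_val]

lemma vv_mul_vv_neg (j : ℤ) : vv n j * vv n (-j) = 1 := by
  rw [← vv_add]; simp [vv_zero]

lemma vv_natCast (m : ℕ) :
    (1 + PowerSeries.X : PowerSeries (ZMod n)) ^ m = vv n (m : ℤ) := by
  rw [vv, zpow_natCast, ← Uu_val]
  exact (Units.val_pow_eq_pow_val _ _).symm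

/-- Evaluation `f ↦ ∑ f j • (1+X)^j`. -/
noncomputable def ev : (ℤ →₀ ZMod n) →+ PowerSeries (ZMod n) :=
  Finsupp.liftAddHom fun j => (smulAddHom (ZMod n) (PowerSeries (ZMod n))).flip (vv n j)

lemma ev_apply (f : ℤ →₀ ZMod n) : ev n f = f.sum fun j c => c • vv n j :=
  Finsupp.liftAddHom_apply _ _

lemma ev_single (j : ℤ) (c : ZMod n) : ev n (Finsupp.single j c) = c • vv n j :=
  Finsupp.liftAddHom_apply_single _ _ _

lemma ev_shift (k : ℤ) (f : ℤ →₀ ZMod n) :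
    ev n (Finsupp.equivMapDomain (Equiv.addRight k) f) = vv n k * ev n f := by
  rw [ev_apply, ev_apply, Finsupp.sum_equivMapDomain, Finsupp.mul_sum]
  refine Finsupp.sum_congr fun j _ => ?_
  show (f j) • vv n (j + k) = vv n k * (f j) • vv n j
  rw [vv_add, mul_smul_comm, mul_comm]

lemma ev_eq_zero {f : ℤ →₀ ZMod n} (h : ev n f = 0) : f = 0 := by
  classical
  set N : ℕ := f.support.sup fun j => j.natAbs with hNdef
  have hN : ∀ j ∈ f.support, (0:ℤ) ≤ j + N := by
    intro j hj
    have h1 : j.natAbs ≤ N := Finset.le_sup (f := fun j : ℤ => j.natAbs) hj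
    omega
  set P : Polynomial (ZMod n) :=
    ∑ j ∈ f.support, Polynomial.monomial (j + N).toNat (f j) with hPdef
  have haev : Polynomial.aeval (1 + PowerSeries.X : PowerSeries (ZMod n)) P = 0 := by
    rw [hPdef, map_sum]
    have hterm : ∀ j ∈ f.support,
        Polynomial.aeval (1 + PowerSeries.X : PowerSeries (ZMod n))
          (Polynomial.monomial (j + N).toNat (f j)) = (f j • vv n j) * vv n N := by
      intro j hj
      rw [Polynomial.aeval_monomial, vv_natCast, Int.toNat_of_nonneg (hN j hj), vv_add,
        Algebra.algebraMap_eq_smul_one, smul_mul_assoc, one_mul, smul_mul_assoc]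
    rw [Finset.sum_congr rfl hterm, ← Finset.sum_mul]
    have he : ev n f = (∑ i ∈ f.support, f i • vv n i) := ev_apply n f
    rw [← he, h, zero_mul]
  have hP0 : P = 0 := by
    have key : (Polynomial.aeval (1 + PowerSeries.X : PowerSeries (ZMod n)) :
        Polynomial (ZMod n) →ₐ[ZMod n] PowerSeries (ZMod n))
        = (Polynomial.coeToPowerSeries.algHom (ZMod n)).comp
          (Polynomial.aeval (Polynomial.X + Polynomial.C 1 : Polynomial (ZMod n))) := by
      apply Polynomial.algHom_ext
      simp [add_comm]
    have h2 : ((Polynomial.aeval (Polynomial.X + Polynomial.C 1 : Polynomial (ZMod n)) P :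
        Polynomial (ZMod n)) : PowerSeries (ZMod n)) = ((0 : Polynomial (ZMod n)) :
        PowerSeries (ZMod n)) := by
      have hck := congrArg (fun F => F P) key
      simp only [AlgHom.comp_apply] at hck
      rw [haev] at hck
      rw [Polynomial.coeToPowerSeries.algHom_apply] at hck
      have hid : algebraMap (ZMod n) (ZMod n) = RingHom.id (ZMod n) := Algebra.algebraMap_self
      rw [hid, PowerSeries.map_id] at hck
      rw [Polynomial.coe_zero]
      exact hck.symm
    have h4 : Polynomial.aeval (Polynomial.X + Polynomial.C 1 : Polynomial (ZMod n)) P = 0 :=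
      Polynomial.coe_injective (ZMod n) h2
    have h5 : Polynomial.taylor 1 P = 0 := by
      rw [Polynomial.taylor_apply, Polynomial.comp_eq_aeval]
      exact h4
    have htinj := Polynomial.taylor_injective (1 : ZMod n) (a₁ := P) (a₂ := 0)
    simp only [map_zero] at htinj
    exact htinj h5
  ext j
  by_contra hj0
  have hj : j ∈ f.support := Finsupp.mem_support_iff.mpr hj0
  have hc : P.coeff (j + N).toNat = f j := by
    rw [hPdef, Polynomial.finset_sum_coeff]
    rw [Finset.sum_eq_single j]
    · simp [Polynomial.coeff_monomial]
    · intro i hi hij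
      rw [Polynomial.coeff_monomial]
      have h1 := hN i hi
      have h2 := hN j hj
      rw [if_neg]
      omega
    · intro hji; exact absurd hj hji
  rw [hP0] at hc
  simp only [Polynomial.coeff_zero] at hc
  exact hj0 hc.symm

lemma ev_injective : Function.Injective (ev n) := by
  rw [injective_iff_map_eq_zero]
  exact fun f hf => ev_eq_zero n hf

end LampAux

/-- The shift action of `ℤ` on `⊕_ℤ A` (written multiplicatively). -/
noncomputable def lampAction (A : Type) [AddCommGroup A] :
    Multiplicative ℤ →* MulAut (Multiplicative (ℤ →₀ A)) where
  toFun k := AddEquiv.toMultiplicative (Finsupp.domCongr (Equiv.addRight k.toAdd))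
  map_one' := by
    ext f i
    show (Finsupp.equivMapDomain _ (Multiplicative.toAdd f)) i = (Multiplicative.toAdd f) i
    simp [Finsupp.equivMapDomain_apply]
    rfl
  map_mul' := by
    intro g h
    ext f i
    show (Finsupp.equivMapDomain _ (Multiplicative.toAdd f)) i = (Finsupp.equivMapDomain _ (Finsupp.equivMapDomain _ (Multiplicative.toAdd f))) i
    simp [Finsupp.equivMapDomain_apply, toAdd_mul, Equiv.Perm.mul_def]
    congr 1
    omega

/-- The restricted wreath product `A ≀ ℤ = (⊕_ℤ A) ⋊ ℤ`, with `ℤ` acting by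
shifting coordinates. -/
def Lamp (A : Type) [AddCommGroup A] :=
  SemidirectProduct (Multiplicative (ℤ →₀ A)) (Multiplicative ℤ) (lampAction A)

noncomputable instance (A : Type) [AddCommGroup A] : Group (Lamp A) :=
  inferInstanceAs (Group (SemidirectProduct _ _ _))

noncomputable section LampAux2
open Multiplicative Finsupp SemidirectProduct

variable (n : ℕ)

/-- Abbreviation for the underlying semidirect product of the lamplighter group. -/
abbrev SD (n : ℕ) :=
  SemidirectProduct (Multiplicative (ℤ →₀ ZMod n)) (Multiplicative ℤ) (lampAction (ZMod n))

/-- The translation part. -/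
noncomputable def addPart : Multiplicative (ℤ →₀ ZMod n) →* Equiv.Perm (PowerSeries (ZMod n)) where
  toFun f := Equiv.addRight (ev n f.toAdd)
  map_one' := by
    ext p
    simp
  map_mul' f g := by
    ext p
    simp only [Equiv.coe_addRight, Equiv.Perm.mul_apply, toAdd_mul, map_add]
    ring

lemma addPart_apply (f : Multiplicative (ℤ →₀ ZMod n)) (p : PowerSeries (ZMod n)) :
    addPart n f p = p + ev n f.toAdd := rfl

/-- The multiplication part. -/
noncomputable def mulPart : Multiplicative ℤ →* Equiv.Perm (PowerSeries (ZMod n)) where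
  toFun k :=
    { toFun := fun p => vv n k.toAdd * p
      invFun := fun p => vv n (-k.toAdd) * p
      left_inv := fun p => by
        show vv n (-k.toAdd) * (vv n k.toAdd * p) = p
        rw [← mul_assoc, mul_comm (vv n (-k.toAdd)), vv_mul_vv_neg, one_mul]
      right_inv := fun p => by
        show vv n k.toAdd * (vv n (-k.toAdd) * p) = p
        rw [← mul_assoc, vv_mul_vv_neg, one_mul] }
  map_one' := by
    apply Equiv.ext
    intro p
    show vv n (toAdd (1 : Multiplicative ℤ)) * p = p
    simp [vv_zero]
  map_mul' k l := by
    apply Equiv.ext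
    intro p
    show vv n (toAdd (k * l)) * p = vv n k.toAdd * (vv n l.toAdd * p)
    rw [toAdd_mul, vv_add, mul_assoc]

lemma mulPart_apply (k : Multiplicative ℤ) (p : PowerSeries (ZMod n)) :
    mulPart n k p = vv n k.toAdd * p := rfl

lemma compat (g : Multiplicative ℤ) :
    (addPart n).comp ((lampAction (ZMod n) g).toMonoidHom) =
      (MulAut.conj (mulPart n g)).toMonoidHom.comp (addPart n) := by
  apply MonoidHom.ext
  intro f
  apply Equiv.ext
  intro p
  show addPart n (lampAction (ZMod n) g f) p = (MulAut.conj (mulPart n g) (addPart n f)) p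
  rw [MulAut.conj_apply]
  rw [addPart_apply]
  have h1 : (lampAction (ZMod n) g f).toAdd
      = Finsupp.equivMapDomain (Equiv.addRight g.toAdd) f.toAdd := rfl
  rw [h1, ev_shift]
  show p + vv n g.toAdd * ev n f.toAdd
      = mulPart n g (addPart n f ((mulPart n g)⁻¹ p))
  have h2 : ((mulPart n g)⁻¹ : Equiv.Perm (PowerSeries (ZMod n))) p = vv n (-g.toAdd) * p := rfl
  rw [h2, addPart_apply, mulPart_apply, mul_add, ← mul_assoc, vv_mul_vv_neg, one_mul]

/-- The homomorphism from the lamplighter group to permutations of power series. -/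
noncomputable def Phi : SD n →* Equiv.Perm (PowerSeries (ZMod n)) :=
  SemidirectProduct.lift (addPart n) (mulPart n) (compat n)

lemma Phi_apply (x : SD n) (p : PowerSeries (ZMod n)) :
    Phi n x p = vv n x.right.toAdd * p + ev n x.left.toAdd := rfl

lemma Phi_injective (hn : 2 ≤ n) : Function.Injective (Phi n) := by
  haveI : Fact (1 < n) := ⟨hn⟩
  rw [injective_iff_map_eq_one]
  rintro ⟨f, k⟩ hx
  have hx' : ∀ p, Phi n ⟨f, k⟩ p = p := fun p => by rw [hx]; rfl
  have h0 := hx' 0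
  rw [Phi_apply] at h0
  simp only [mul_zero, zero_add] at h0
  have hf : f.toAdd = 0 := ev_eq_zero n h0
  have h1 := hx' 1
  rw [Phi_apply] at h1
  rw [h0, add_zero, mul_one] at h1
  have hk : k.toAdd = 0 := by
    have he : ev n (Finsupp.single k.toAdd 1) = ev n (Finsupp.single 0 1) := by
      rw [ev_single, ev_single, one_smul, one_smul, h1, vv_zero]
    have := ev_injective n he
    exact Finsupp.single_left_injective (one_ne_zero (α := ZMod n)) this
  have hf1 : f = 1 := toAdd.injective hf
  have hk1 : k = 1 := toAdd.injective hk
  rw [hf1, hk1]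
  rfl

/-- The generator corresponding to `α`. -/
noncomputable def aGen : SD n :=
  SemidirectProduct.inl (Multiplicative.ofAdd (Finsupp.single 0 1))

/-- The generator corresponding to `μ`. -/
noncomputable def tGen : SD n :=
  SemidirectProduct.inr (φ := lampAction (ZMod n)) (Multiplicative.ofAdd 1)

lemma tGen_zpow (j : ℤ) :
    tGen n ^ j = SemidirectProduct.inr (φ := lampAction (ZMod n)) (Multiplicative.ofAdd j) := by
  rw [tGen, ← map_zpow]
  congr 1
  apply Multiplicative.toAdd.injective
  rw [toAdd_zpow]
  simp

lemma aGen_pow (m : ℕ) :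
    aGen n ^ m = SemidirectProduct.inl (φ := lampAction (ZMod n))
      (Multiplicative.ofAdd (Finsupp.single 0 (m : ZMod n))) := by
  rw [aGen, ← map_pow]
  congr 1
  apply Multiplicative.toAdd.injective
  rw [toAdd_pow]
  show m • Finsupp.single (0:ℤ) (1 : ZMod n) = Finsupp.single 0 (m : ZMod n)
  rw [Finsupp.smul_single]
  congr 1
  simp

lemma inl_single_eq [NeZero n] (j : ℤ) (c : ZMod n) :
    (SemidirectProduct.inl (Multiplicative.ofAdd (Finsupp.single j c)) : SD n)
      = tGen n ^ j * aGen n ^ (ZMod.val c) * (tGen n ^ j)⁻¹ := by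
  rw [aGen_pow, tGen_zpow, ← map_inv]
  have hphi : lampAction (ZMod n) (Multiplicative.ofAdd j)
      (Multiplicative.ofAdd (Finsupp.single 0 ((ZMod.val c : ZMod n))))
      = Multiplicative.ofAdd (Finsupp.single j c) := by
    show Multiplicative.ofAdd
        (Finsupp.equivMapDomain (Equiv.addRight ((Multiplicative.ofAdd j).toAdd))
          (Finsupp.single 0 ((ZMod.val c : ZMod n)))) = _
    rw [Finsupp.equivMapDomain_single]
    have e1 : (Equiv.addRight ((Multiplicative.ofAdd j).toAdd)) 0 = j := by simp
    rw [e1, ZMod.natCast_rightInverse c]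
  rw [← hphi, SemidirectProduct.inl_aut]

lemma inl_mem [NeZero n] (H : Subgroup (SD n))
    (h : ∀ (j : ℤ) (c : ZMod n),
      (SemidirectProduct.inl (Multiplicative.ofAdd (Finsupp.single j c)) : SD n) ∈ H)
    (g : ℤ →₀ ZMod n) :
    (SemidirectProduct.inl (Multiplicative.ofAdd g) : SD n) ∈ H := by
  induction g using Finsupp.induction with
  | zero =>
    have h00 : (SemidirectProduct.inl (Multiplicative.ofAdd (0 : ℤ →₀ ZMod n)) : SD n) = 1 := by
      rw [show (Multiplicative.ofAdd (0 : ℤ →₀ ZMod n)) = 1 from rfl, map_one]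
    rw [h00]; exact one_mem H
  | single_add j c g hj hc ih =>
    have hsplit : (Multiplicative.ofAdd (Finsupp.single j c + g))
        = Multiplicative.ofAdd (Finsupp.single j c) * Multiplicative.ofAdd g := rfl
    rw [hsplit, map_mul]
    exact mul_mem (h j c) ih

lemma gen_top [NeZero n] : Subgroup.closure {aGen n, tGen n} = (⊤ : Subgroup (SD n)) := by
  rw [eq_top_iff]
  intro x _
  have ha : aGen n ∈ Subgroup.closure {aGen n, tGen n} :=
    Subgroup.subset_closure (Set.mem_insert _ _)
  have ht : tGen n ∈ Subgroup.closure {aGen n, tGen n} :=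
    Subgroup.subset_closure (Set.mem_insert_of_mem _ rfl)
  have h1 : ∀ (j : ℤ) (c : ZMod n),
      (SemidirectProduct.inl (Multiplicative.ofAdd (Finsupp.single j c)) : SD n)
        ∈ Subgroup.closure {aGen n, tGen n} := by
    intro j c
    rw [inl_single_eq]
    exact mul_mem (mul_mem (zpow_mem ht j) (pow_mem ha _)) (inv_mem (zpow_mem ht j))
  rw [← SemidirectProduct.inl_left_mul_inr_right x]
  refine mul_mem ?_ ?_
  · have := inl_mem n _ h1 x.left.toAdd
    simpa using this
  · have h2 : (SemidirectProduct.inr x.right : SD n) = tGen n ^ (x.right.toAdd) := by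
      rw [tGen_zpow, ofAdd_toAdd]
    rw [h2]
    exact zpow_mem ht _

lemma nc_eq [NeZero n] :
    Subgroup.normalClosure {aGen n}
      = (SemidirectProduct.inl :
          Multiplicative (ℤ →₀ ZMod n) →* SD n).range := by
  apply le_antisymm
  · haveI hnormal : ((SemidirectProduct.inl :
        Multiplicative (ℤ →₀ ZMod n) →* SD n).range).Normal := by
      rw [SemidirectProduct.range_inl_eq_ker_rightHom]
      infer_instance
    apply Subgroup.normalClosure_le_normal
    intro x hx
    rw [Set.mem_singleton_iff] at hx
    subst hx
    exact ⟨_, rfl⟩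
  · rintro x ⟨f, rfl⟩
    have h1 : ∀ (j : ℤ) (c : ZMod n),
        (SemidirectProduct.inl (Multiplicative.ofAdd (Finsupp.single j c)) : SD n)
          ∈ Subgroup.normalClosure {aGen n} := by
      intro j c
      rw [inl_single_eq]
      exact Subgroup.normalClosure_normal.conj_mem _
        (pow_mem (Subgroup.subset_normalClosure (Set.mem_singleton _)) _) _
    have := inl_mem n _ h1 f.toAdd
    simpa using this

end LampAux2

/-- For `n ≥ 2` and `R = ℤ/nℤ`, the group of bijections of `R[[t]]` generated
by `α : p ↦ p + 1` and `μ : p ↦ (1+t)·p` is isomorphic to the lamplighter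
group `L_n = (ℤ/nℤ) ≀ ℤ`, and the normal closure of `α` in it is isomorphic
to `⊕_ℤ ℤ/nℤ`. -/
theorem stmt_7 (n : ℕ) (hn : 2 ≤ n)
    (α μ : Equiv.Perm (PowerSeries (ZMod n)))
    (hα : ⇑α = fun p => p + 1)
    (hμ : ⇑μ = fun p => (1 + PowerSeries.X) * p) :
    Nonempty ((Subgroup.closure {α, μ}) ≃* Lamp (ZMod n)) ∧
    Nonempty ((Subgroup.normalClosure
        ({⟨α, Subgroup.subset_closure (Set.mem_insert _ _)⟩} :
          Set (Subgroup.closure {α, μ}))) ≃* Multiplicative (ℤ →₀ ZMod n)) := by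
  haveI : NeZero n := ⟨by omega⟩
  -- Phi sends the generators to α and μ
  have hPa : Phi n (aGen n) = α := by
    apply Equiv.ext
    intro p
    rw [hα]
    show vv n ((aGen n).right.toAdd) * p + ev n ((aGen n).left.toAdd) = p + 1
    have h1 : (aGen n).right = 1 := rfl
    have h2 : (aGen n).left = Multiplicative.ofAdd (Finsupp.single 0 1) := rfl
    rw [h1, h2, toAdd_ofAdd, ev_single, one_smul, vv_zero]
    show vv n (Multiplicative.toAdd (1 : Multiplicative ℤ)) * p + 1 = p + 1
    have : Multiplicative.toAdd (1 : Multiplicative ℤ) = 0 := rfl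
    rw [this, vv_zero, one_mul]
  have hPt : Phi n (tGen n) = μ := by
    apply Equiv.ext
    intro p
    rw [hμ]
    show vv n ((tGen n).right.toAdd) * p + ev n ((tGen n).left.toAdd) = (1 + PowerSeries.X) * p
    have h1 : (tGen n).right = Multiplicative.ofAdd 1 := rfl
    have h2 : (tGen n).left = 1 := rfl
    rw [h1, h2, toAdd_ofAdd, vv_one]
    have : Multiplicative.toAdd (1 : Multiplicative (ℤ →₀ ZMod n)) = 0 := rfl
    rw [this, map_zero, add_zero]
  have hrange : (Phi n).range = Subgroup.closure {α, μ} := by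
    rw [MonoidHom.range_eq_map, ← gen_top n, MonoidHom.map_closure, Set.image_insert_eq,
      Set.image_singleton, hPa, hPt]
  have hinj := Phi_injective n hn
  let e0 : SD n ≃* (Phi n).range := MonoidHom.ofInjective hinj
  let eIso : (Subgroup.closure {α, μ}) ≃* SD n :=
    (MulEquiv.subgroupCongr hrange.symm).trans e0.symm
  constructor
  · exact ⟨eIso⟩
  · set α' : (Subgroup.closure {α, μ}) :=
      (⟨α, Subgroup.subset_closure (Set.mem_insert _ _)⟩ : (Subgroup.closure {α, μ})) with hα'
    have heα : eIso α' = aGen n := by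
      show e0.symm (MulEquiv.subgroupCongr hrange.symm α') = aGen n
      rw [MulEquiv.symm_apply_eq]
      apply Subtype.ext
      show ((MulEquiv.subgroupCongr hrange.symm α' : (Phi n).range) : Equiv.Perm (PowerSeries (ZMod n))) = ((e0 (aGen n) : (Phi n).range) : Equiv.Perm (PowerSeries (ZMod n)))
      rw [MulEquiv.subgroupCongr_apply]
      have : ((e0 (aGen n) : (Phi n).range) : Equiv.Perm (PowerSeries (ZMod n))) = Phi n (aGen n) := rfl
      rw [this, hPa]
    have hmap : Subgroup.map eIso.toMonoidHom (Subgroup.normalClosure {α'})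
        = Subgroup.normalClosure {aGen n} := by
      rw [Subgroup.map_normalClosure _ _ eIso.surjective, Set.image_singleton]
      congr 1
      rw [show (eIso.toMonoidHom α' : SD n) = eIso α' from rfl, heα]
    let e2 : (Subgroup.normalClosure {α'}) ≃* (Subgroup.normalClosure {aGen n} : Subgroup (SD n)) :=
      (Subgroup.equivMapOfInjective _ eIso.toMonoidHom eIso.injective).trans
        (MulEquiv.subgroupCongr hmap)
    let e3 : (Subgroup.normalClosure {aGen n} : Subgroup (SD n)) ≃*
        (SemidirectProduct.inl : Multiplicative (ℤ →₀ ZMod n) →* SD n).range :=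
      MulEquiv.subgroupCongr (nc_eq n)
    let e4 : (SemidirectProduct.inl : Multiplicative (ℤ →₀ ZMod n) →* SD n).range ≃*
        Multiplicative (ℤ →₀ ZMod n) :=
      (MonoidHom.ofInjective SemidirectProduct.inl_injective).symm
    exact ⟨e2.trans (e3.trans e4)⟩
end

section
/- Let m, n ≥ 2 be relatively prime integers. In the group of bijections of the n-adic integers ℤ_n, the subgroup generated by α : u ↦ u + 1 and μ : u ↦ m·u is isomorphic to the Baumslag–Solitar group BS(1,m) = ⟨a, t | t a t^{-1} = a^m⟩. -/
/-- The ring of `n`-adic integers `ℤ_n`: compatible sequences in the inverse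
limit of the rings `ℤ/n^kℤ`. -/
def nAdicSubring (n : ℕ) : Subring (∀ k : ℕ, ZMod (n ^ k)) where
  carrier := { f | ∀ k : ℕ,
    ZMod.castHom (pow_dvd_pow n (Nat.le_succ k)) (ZMod (n ^ k)) (f (k + 1)) = f k }
  zero_mem' := by intro k; simp only [Pi.zero_apply, map_zero]
  one_mem' := by intro k; simp only [Pi.one_apply, map_one]
  add_mem' := by intro f g hf hg k; simp only [Pi.add_apply, map_add, hf k, hg k]
  neg_mem' := by intro f hf k; simp only [Pi.neg_apply, map_neg, hf k]
  mul_mem' := by intro f g hf hg k; simp only [Pi.mul_apply, map_mul, hf k, hg k]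

/-- The `n`-adic integers as a type. -/
def nAdicInt (n : ℕ) : Type := nAdicSubring n

noncomputable instance (n : ℕ) : CommRing (nAdicInt n) :=
  inferInstanceAs (CommRing (nAdicSubring n))

/-- The Baumslag–Solitar group `BS(1,m) = ⟨a, t ∣ t a t⁻¹ = a^m⟩`, with
generators `a = of false` and `t = of true`. -/
def BS (m : ℕ) : Type :=
  PresentedGroup
    ({FreeGroup.of true * FreeGroup.of false * (FreeGroup.of true)⁻¹ *
        (FreeGroup.of false ^ m)⁻¹} : Set (FreeGroup Bool))

instance (m : ℕ) : Group (BS m) :=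
  inferInstanceAs (Group (PresentedGroup _))

/-- Projection of the `n`-adic integers onto coordinate `K`. -/
def nAdicProj (n K : ℕ) : nAdicInt n →+* ZMod (n ^ K) :=
  (Pi.evalRingHom _ K).comp (nAdicSubring n).subtype

/-- The `n`-adic integers have no integer torsion for `n ≥ 2`. -/
theorem nAdicInt_intCast_eq_zero {n : ℕ} (hn : 2 ≤ n) (k : ℤ)
    (h : ((k : ℤ) : nAdicInt n) = 0) : k = 0 := by
  by_contra hk
  have h1 : (nAdicProj n k.natAbs) ((k : ℤ) : nAdicInt n) = (k : ZMod (n ^ k.natAbs)) :=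
    map_intCast _ _
  rw [h, map_zero] at h1
  have h2 : ((n ^ k.natAbs : ℕ) : ℤ) ∣ k := by
    rwa [← ZMod.intCast_zmod_eq_zero_iff_dvd, eq_comm]
  have h3 : k.natAbs < n ^ k.natAbs := Nat.lt_pow_self hn
  have h4 := Int.natAbs_dvd_natAbs.mpr h2
  rw [Int.natAbs_natCast] at h4
  have h5 := Nat.le_of_dvd (by omega) h4
  omega

namespace BSAux

variable {m : ℕ}

/-- The generator `a` of `BS m`. -/
def A (m : ℕ) : BS m := PresentedGroup.of false
/-- The generator `t` of `BS m`. -/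
def T (m : ℕ) : BS m := PresentedGroup.of true

theorem bs_rel (m : ℕ) : T m * A m * (T m)⁻¹ = A m ^ m := by
  have h : (PresentedGroup.mk _ (FreeGroup.of true * FreeGroup.of false *
      (FreeGroup.of true)⁻¹ * (FreeGroup.of false ^ m)⁻¹) : BS m) = 1 := by
    apply (QuotientGroup.eq_one_iff _).2
    exact Subgroup.subset_normalClosure (Set.mem_singleton _)
  rw [map_mul, map_mul, map_mul, map_inv, map_inv, map_pow] at h
  rw [mul_inv_eq_one] at h
  exact h

theorem tconj_zpow (k : ℤ) : T m * A m ^ k * (T m)⁻¹ = A m ^ (k * m) := by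
  rw [← conj_zpow, bs_rel, ← zpow_natCast (A m) m, ← zpow_mul, mul_comm]

theorem conj_pow_zpow (p : ℕ) (k : ℤ) :
    T m ^ p * A m ^ k * (T m ^ p)⁻¹ = A m ^ (k * (m : ℤ) ^ p) := by
  induction p generalizing k with
  | zero => simp
  | succ p ih =>
    have : T m ^ (p + 1) * A m ^ k * (T m ^ (p + 1))⁻¹
        = T m ^ p * (T m * A m ^ k * (T m)⁻¹) * (T m ^ p)⁻¹ := by
      rw [pow_succ]; group
    rw [this, tconj_zpow, ih]
    congr 1
    ring

theorem t_pow_mul (p : ℕ) (k : ℤ) :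
    T m ^ p * A m ^ k = A m ^ (k * (m : ℤ) ^ p) * T m ^ p := by
  rw [← conj_pow_zpow]; group

theorem mul_t_pow_inv (p : ℕ) (k : ℤ) :
    A m ^ k * (T m ^ p)⁻¹ = (T m ^ p)⁻¹ * A m ^ (k * (m : ℤ) ^ p) := by
  rw [← conj_pow_zpow]; group

/-- Normal form in `BS m`. -/
theorem normal_form (g : BS m) :
    ∃ (p q : ℕ) (k : ℤ), g = (T m ^ p)⁻¹ * A m ^ k * T m ^ q := by
  have hg : g ∈ Subgroup.closure (G := BS m) (Set.range (PresentedGroup.of :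
      Bool → BS m)) := by
    have e : Subgroup.closure (G := BS m) (Set.range (PresentedGroup.of : Bool → BS m)) =
        (⊤ : Subgroup (BS m)) := PresentedGroup.closure_range_of _
    exact (congrArg (g ∈ ·) e).mpr (Subgroup.mem_top g)
  induction hg using Subgroup.closure_induction with
  | mem x hx =>
    obtain ⟨b, rfl⟩ := hx
    cases b
    · exact ⟨0, 0, 1, by simp; rfl⟩
    · exact ⟨0, 1, 0, by simp; rfl⟩
  | one => exact ⟨0, 0, 0, by simp⟩
  | mul x y hx hy ihx ihy =>
    obtain ⟨p, q, k, rfl⟩ := ihx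
    obtain ⟨p', q', k', rfl⟩ := ihy
    rcases le_total p' q with h | h
    · refine ⟨p, q - p' + q', k + k' * (m : ℤ) ^ (q - p'), ?_⟩
      have hq : T m ^ q = T m ^ (q - p') * T m ^ p' := by
        rw [← pow_add]; congr 1; omega
      rw [hq]
      calc (T m ^ p)⁻¹ * A m ^ k * (T m ^ (q - p') * T m ^ p') *
            ((T m ^ p')⁻¹ * A m ^ k' * T m ^ q')
          = (T m ^ p)⁻¹ * A m ^ k * (T m ^ (q - p') * A m ^ k') * T m ^ q' := by
            group
        _ = (T m ^ p)⁻¹ * A m ^ k * (A m ^ (k' * (m:ℤ) ^ (q - p')) * T m ^ (q - p')) *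
            T m ^ q' := by rw [t_pow_mul]
        _ = (T m ^ p)⁻¹ * A m ^ (k + k' * (m:ℤ) ^ (q - p')) * T m ^ (q - p' + q') := by
            rw [zpow_add, pow_add]; group
    · refine ⟨p + (p' - q), q', k * (m : ℤ) ^ (p' - q) + k', ?_⟩
      have hp' : (T m ^ p')⁻¹ = (T m ^ (p' - q))⁻¹ * (T m ^ q)⁻¹ := by
        rw [← mul_inv_rev, ← pow_add]; congr 2; omega
      rw [hp']
      calc (T m ^ p)⁻¹ * A m ^ k * T m ^ q *
            ((T m ^ (p' - q))⁻¹ * (T m ^ q)⁻¹ * A m ^ k' * T m ^ q')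
          = (T m ^ p)⁻¹ * (A m ^ k * (T m ^ (p' - q))⁻¹) * A m ^ k' * T m ^ q' := by
            group
        _ = (T m ^ p)⁻¹ * ((T m ^ (p' - q))⁻¹ * A m ^ (k * (m:ℤ) ^ (p' - q))) *
            A m ^ k' * T m ^ q' := by rw [mul_t_pow_inv]
        _ = (T m ^ (p + (p' - q)))⁻¹ * A m ^ (k * (m:ℤ) ^ (p' - q) + k') * T m ^ q' := by
            rw [zpow_add, pow_add]; group
  | inv x hx ihx =>
    obtain ⟨p, q, k, rfl⟩ := ihx
    exact ⟨q, p, -k, by group⟩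

end BSAux

/-- For relatively prime `m, n ≥ 2`, the subgroup of the bijections of the
`n`-adic integers generated by `α : u ↦ u + 1` and `μ : u ↦ m·u` is
isomorphic to `BS(1,m)`, via `a ↦ α`, `t ↦ μ`. -/
theorem stmt_11 (m n : ℕ) (hm : 2 ≤ m) (hn : 2 ≤ n) (hcop : Nat.Coprime m n)
    (α μ : Equiv.Perm (nAdicInt n))
    (hα : ⇑α = fun u => u + 1)
    (hμ : ⇑μ = fun u => (m : nAdicInt n) * u) :
    ∃ φ : BS m →* Equiv.Perm (nAdicInt n),
      Function.Injective φ ∧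
      φ (PresentedGroup.of false) = α ∧ φ (PresentedGroup.of true) = μ ∧
      φ.range = Subgroup.closure {α, μ} := by
  have hαa : ∀ u, α u = u + 1 := fun u => by rw [hα]
  have hμa : ∀ u, μ u = (m : nAdicInt n) * u := fun u => by rw [hμ]
  -- values of powers
  have hαn : ∀ (p : ℕ) (u : nAdicInt n), (α ^ p) u = u + (p : nAdicInt n) := by
    intro p
    induction p with
    | zero => intro u; simp
    | succ p ih =>
      intro u
      rw [pow_succ', Equiv.Perm.mul_apply, hαa, ih]
      push_cast; ring
  have hαinv : ∀ u, α⁻¹ u = u - 1 := by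
    intro u
    rw [Equiv.Perm.inv_def, Equiv.symm_apply_eq, hαa]
    ring
  have hαz : ∀ (k : ℤ) (u : nAdicInt n), (α ^ k) u = u + (k : nAdicInt n) := by
    intro k
    induction k using Int.induction_on with
    | zero => intro u; simp
    | succ i ih =>
      intro u
      rw [zpow_add_one, Equiv.Perm.mul_apply, hαa, ih]
      push_cast; ring
    | pred i ih =>
      intro u
      rw [zpow_sub_one, Equiv.Perm.mul_apply, hαinv, ih]
      push_cast; ring
  have hμn : ∀ (p : ℕ) (u : nAdicInt n), (μ ^ p) u = (m : nAdicInt n) ^ p * u := by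
    intro p
    induction p with
    | zero => intro u; simp
    | succ p ih =>
      intro u
      rw [pow_succ', Equiv.Perm.mul_apply, hμa, ih, pow_succ]
      ring
  -- the relation holds for α, μ
  have hrel : μ * α * μ⁻¹ = α ^ m := by
    ext u
    have h1 : (μ * α * μ⁻¹) u = μ (α (μ⁻¹ u)) := rfl
    have h2 : μ (μ⁻¹ u) = u := Equiv.apply_symm_apply μ u
    rw [hμa] at h2
    rw [h1, hαn, hμa, hαa, mul_add, h2, mul_one]
  set f : Bool → Equiv.Perm (nAdicInt n) := fun b => bif b then μ else α with hfdef
  have hf : ∀ r ∈ ({FreeGroup.of true * FreeGroup.of false * (FreeGroup.of true)⁻¹ *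
        (FreeGroup.of false ^ m)⁻¹} : Set (FreeGroup Bool)),
      FreeGroup.lift f r = 1 := by
    intro r hr
    rw [Set.mem_singleton_iff] at hr
    subst hr
    simp only [map_mul, map_inv, map_pow, FreeGroup.lift_apply_of, hfdef, cond_true, cond_false]
    rw [hrel, mul_inv_cancel]
  let φ : BS m →* Equiv.Perm (nAdicInt n) := PresentedGroup.toGroup hf
  have hA : φ (BSAux.A m) = α := PresentedGroup.toGroup.of hf
  have hT : φ (BSAux.T m) = μ := PresentedGroup.toGroup.of hf
  refine ⟨φ, ?_, hA, hT, ?_⟩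
  · -- injectivity
    rw [injective_iff_map_eq_one]
    intro g hg
    obtain ⟨p, q, k, rfl⟩ := BSAux.normal_form g
    rw [map_mul, map_mul, map_inv, map_pow, map_zpow, map_pow] at hg
    simp only [hA, hT] at hg
    -- evaluate at 0
    have h0 : ((μ ^ p)⁻¹ * α ^ k * μ ^ q) (0 : nAdicInt n) = 0 := by rw [hg]; rfl
    rw [Equiv.Perm.mul_apply, Equiv.Perm.mul_apply, hμn, mul_zero, hαz, zero_add] at h0
    have hk0 : ((k : ℤ) : nAdicInt n) = 0 := by
      have := congrArg (μ ^ p) h0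
      rw [← Equiv.Perm.mul_apply, mul_inv_cancel, Equiv.Perm.one_apply, hμn, mul_zero] at this
      exact this
    have hk : k = 0 := nAdicInt_intCast_eq_zero hn k hk0
    subst hk
    rw [zpow_zero, mul_one, inv_mul_eq_one] at hg
    -- evaluate at 1
    have h1 : (μ ^ p) (1 : nAdicInt n) = (μ ^ q) (1 : nAdicInt n) := by rw [hg]
    rw [hμn, hμn, mul_one, mul_one] at h1
    have hpq : ((m : ℤ) ^ p - (m : ℤ) ^ q : ℤ) = 0 := by
      apply nAdicInt_intCast_eq_zero hn
      push_cast
      rw [h1, sub_self]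
    have : (m : ℤ) ^ p = (m : ℤ) ^ q := by omega
    have hmn : m ^ p = m ^ q := by exact_mod_cast this
    have : p = q := Nat.pow_right_injective hm hmn
    subst this
    rw [zpow_zero, mul_one, inv_mul_cancel]
  · -- range
    have hAT : (Set.range (PresentedGroup.of : Bool → BS m)) = {BSAux.A m, BSAux.T m} := by
      ext x
      constructor
      · rintro ⟨b, rfl⟩
        cases b
        · exact Set.mem_insert _ _
        · exact Set.mem_insert_of_mem _ rfl
      · rintro (rfl | rfl)
        · exact ⟨false, rfl⟩
        · exact ⟨true, rfl⟩
    rw [show φ.range = Subgroup.map φ (Subgroup.closure {BSAux.A m, BSAux.T m}) by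
      rw [MonoidHom.range_eq_map]; congr 1
      exact (PresentedGroup.closure_range_of _).symm.trans (congrArg Subgroup.closure hAT),
      MonoidHom.map_closure, Set.image_pair]
    simp only [hA, hT]
end

section
/- Let ||M|| = max_i Σ_j |m_{i,j}| be the maximum absolute row-sum norm of a d×d integer matrix M, and let n ≥ 2. For any vector x ∈ ℤ^d with entries in {0,…,n-1} and any vector v ∈ ℤ^d with entries in [-||M||, ||M||-1], every entry of the floor quotient (M·x + v) div n (componentwise) lies in [-||M||, ||M||-1]. -/
/-- Let `‖M‖` be the maximum absolute row-sum norm of a `d×d` integer matrix `M`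
and `n ≥ 2`. For `x ∈ {0,…,n-1}^d` and `v` with entries in `[-‖M‖, ‖M‖-1]`,
every entry of the componentwise floor quotient `(M·x + v) div n` lies in
`[-‖M‖, ‖M‖-1]`. -/
theorem stmt_16 (d : ℕ) (M : Matrix (Fin d) (Fin d) ℤ) (n : ℤ) (hn : 2 ≤ n)
    (norm : ℤ) (hnorm : norm = ((Finset.univ.sup fun i : Fin d => ∑ j : Fin d, (M i j).natAbs : ℕ) : ℤ))
    (x v : Fin d → ℤ)
    (hx : ∀ i, 0 ≤ x i ∧ x i ≤ n - 1)
    (hv : ∀ i, -norm ≤ v i ∧ v i ≤ norm - 1) :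
    ∀ i, -norm ≤ ((M.mulVec x + v) i).fdiv n ∧ ((M.mulVec x + v) i).fdiv n ≤ norm - 1 := by
  intro i
  set S : ℤ := ∑ j : Fin d, ((M i j).natAbs : ℤ) with hSdef
  have hS : S ≤ norm := by
    rw [hnorm]
    have := Finset.le_sup (f := fun i : Fin d => ∑ j : Fin d, (M i j).natAbs)
      (Finset.mem_univ i)
    calc S = ((∑ j : Fin d, (M i j).natAbs : ℕ) : ℤ) := by push_cast [hSdef]; ring
      _ ≤ _ := by exact_mod_cast this
  have hSnn : 0 ≤ S := Finset.sum_nonneg fun j _ => Int.natCast_nonneg _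
  have hup : M.mulVec x i ≤ S * (n - 1) := by
    rw [Matrix.mulVec, dotProduct, hSdef, Finset.sum_mul]
    apply Finset.sum_le_sum
    intro j _
    have h1 := (hx j).1
    have h2 := (hx j).2
    have hA : M i j ≤ ((M i j).natAbs : ℤ) := Int.le_natAbs
    nlinarith [Int.natCast_nonneg (M i j).natAbs]
  have hlo : -(S * (n - 1)) ≤ M.mulVec x i := by
    rw [Matrix.mulVec, dotProduct, hSdef, Finset.sum_mul, ← Finset.sum_neg_distrib]
    apply Finset.sum_le_sum
    intro j _
    have h1 := (hx j).1
    have h2 := (hx j).2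
    have hA : -((M i j).natAbs : ℤ) ≤ M i j := by omega
    nlinarith [Int.natCast_nonneg (M i j).natAbs]
  set a : ℤ := (M.mulVec x + v) i with ha
  have hv1 := (hv i).1
  have hv2 := (hv i).2
  have ha1 : -(norm * n) ≤ a := by
    have : -(S * (n - 1)) + -norm ≤ a := by
      simp only [ha, Pi.add_apply]; linarith
    nlinarith
  have ha2 : a ≤ norm * n - 1 := by
    have : a ≤ S * (n - 1) + (norm - 1) := by
      simp only [ha, Pi.add_apply]; linarith
    nlinarith
  have hnpos : 0 < n := by linarith
  have key := Int.mul_fdiv_add_fmod a n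
  have hr1 : 0 ≤ a.fmod n := Int.fmod_nonneg_of_pos a (by linarith)
  have hr2 : a.fmod n < n := Int.fmod_lt_of_pos a hnpos
  set q : ℤ := a.fdiv n with hq
  constructor
  · by_contra h
    push_neg at h
    have : q ≤ -norm - 1 := by linarith
    nlinarith
  · by_contra h
    push_neg at h
    have : norm ≤ q := by linarith
    nlinarith
end

section
/- Let m₁, m₂, n be positive integers with m₁, m₂ relatively prime to n. Define, for an integer m coprime to n, the maps ρ(i,j) = (m·j + i) mod n and τ(i,j) = (m·j + i) div n for states i ∈ {0,…,m-1} and letters j ∈ {0,…,n-1} (the automaton S_{m,n}). Then the map (i, j') ↦ m₁·j' + i (for i ∈ {0,…,m₁-1}, j' ∈ {0,…,m₂-1}) is a bijection from the state set of the composed automaton S_{m₁,n}·S_{m₂,n} to the state set {0,…,m₁m₂-1} of S_{m₁m₂,n}, compatible with both the rewriting and the transition functions: for all letters x ∈ {0,…,n-1}, ρ_{m₁m₂}(m₁j'+i, x) = ρ_{m₁}(i, ρ_{m₂}(j', x)) and τ_{m₁m₂}(m₁j'+i, x) = m₁·τ_{m₂}(j', x) + τ_{m₁}(i, ρ_{m₂}(j',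 x)). -/
/-- Composition of the automata `S_{m₁,n}` and `S_{m₂,n}` is isomorphic to
`S_{m₁m₂,n}` via `(i, j') ↦ m₁·j' + i`: this map is a bijection of state sets
compatible with the rewriting and transition functions, where
`ρ_m(i,x) = (m·x + i) mod n` and `τ_m(i,x) = (m·x + i) div n`. -/
theorem stmt_19 (m₁ m₂ n : ℤ) (hm₁ : 0 < m₁) (hm₂ : 0 < m₂) (hn : 0 < n)
    (h₁ : IsCoprime m₁ n) (h₂ : IsCoprime m₂ n) :
    Set.BijOn (fun p : ℤ × ℤ => m₁ * p.2 + p.1)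
      (Set.Ico 0 m₁ ×ˢ Set.Ico 0 m₂) (Set.Ico 0 (m₁ * m₂)) ∧
    (∀ i j' x : ℤ, 0 ≤ i → i < m₁ → 0 ≤ j' → j' < m₂ → 0 ≤ x → x < n →
      ((m₁ * m₂) * x + (m₁ * j' + i)) % n = (m₁ * ((m₂ * x + j') % n) + i) % n) ∧
    (∀ i j' x : ℤ, 0 ≤ i → i < m₁ → 0 ≤ j' → j' < m₂ → 0 ≤ x → x < n →
      ((m₁ * m₂) * x + (m₁ * j' + i)) / n =
        m₁ * ((m₂ * x + j') / n) + (m₁ * ((m₂ * x + j') % n) + i) / n) := by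
  have key : ∀ i j' x : ℤ,
      (m₁ * m₂) * x + (m₁ * j' + i)
        = n * (m₁ * ((m₂ * x + j') / n)) + (m₁ * ((m₂ * x + j') % n) + i) := by
    intro i j' x
    have := Int.mul_ediv_add_emod (m₂ * x + j') n
    ring_nf
    nlinarith [Int.mul_ediv_add_emod (m₂ * x + j') n]
  refine ⟨⟨?_, ?_, ?_⟩, ?_, ?_⟩
  · rintro ⟨i, j⟩ ⟨⟨hi0, hi1⟩, hj0, hj1⟩
    simp only [Set.mem_Ico]
    constructor
    · nlinarith
    · nlinarith
  · rintro ⟨i, j⟩ ⟨⟨hi0, hi1⟩, hj0, hj1⟩ ⟨i', j''⟩ ⟨⟨hi0', hi1'⟩, hj0', hj1'⟩ h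
    simp only at h
    have hij : i = i' := by
      have h1 : i % m₁ = i' % m₁ := by
        have : (m₁ * j + i) % m₁ = (m₁ * j'' + i') % m₁ := by rw [h]
        rw [add_comm (m₁*j) i, add_comm (m₁*j'') i', Int.add_mul_emod_self_left, Int.add_mul_emod_self_left] at this; exact this
      rwa [Int.emod_eq_of_lt hi0 hi1, Int.emod_eq_of_lt hi0' hi1'] at h1
    have hjj : j = j'' := by
      have : m₁ * j = m₁ * j'' := by omega
      exact mul_left_cancel₀ hm₁.ne' this
    simp [hij, hjj]
  · rintro k ⟨hk0, hk1⟩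
    refine ⟨(k % m₁, k / m₁), ⟨⟨Int.emod_nonneg k hm₁.ne', Int.emod_lt_of_pos k hm₁⟩,
      Int.ediv_nonneg hk0 hm₁.le, ?_⟩, ?_⟩
    · exact Int.ediv_lt_of_lt_mul hm₁ (by linarith [mul_comm m₁ m₂])
    · simp [Int.ediv_mul_add_emod, Int.emod_add_mul_ediv k m₁, mul_comm]
      linarith [Int.mul_ediv_add_emod k m₁]
  · intro i j' x _ _ _ _ _ _
    rw [key i j' x, add_comm (n * _), Int.add_mul_emod_self_left]
  · intro i j' x _ _ _ _ _ _
    rw [key i j' x, add_comm (n * _), Int.add_mul_ediv_left _ _ hn.ne', add_comm]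
end
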